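/- Let ψ be a species tree topology on X with |X| = n ≥ 2 and let T be a gene tree on X. There exists a coalescent history h ∈ H_{ψ,T} that is a bijection from I_T onto I_ψ (equivalently, Φ_{ψ,T}(h) is the constant function 1 on I_ψ) if and only if T has the same set of clades as ψ, i.e., T is the matching gene tree T_M of ψ. -/

import Mathlib

/-!
Rooted binary trees with leaves labeled by elements of a finite label set.
Each node of a tree is identified with the subtree rooted at it; since leaf
labels are required to be distinct, this identification is faithful.
-/

inductive RBT (α : Type) where
  | leaf (x : α)
  | node (l r : RBT α)
deriving DecidableEq

namespace RBT

variable {α : Type} [DecidableEq α]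

/-- The list of leaf labels, left to right. -/
def leafList : RBT α → List α
  | leaf x => [x]
  | node l r => l.leafList ++ r.leafList

/-- The clade of a node: the set of labels of leaves descended from or equal to it. -/
def clade (t : RBT α) : Finset α := t.leafList.toFinset

/-- `t` is a rooted binary tree on the label set `X`: its leaf labels are
distinct and form exactly the set `X`. -/
def IsTreeOn (t : RBT α) (X : Finset α) : Prop :=
  t.leafList.Nodup ∧ t.clade = X

/-- All nodes of a tree, each identified with the subtree rooted at it. -/
def subtrees : RBT α → Finset (RBT α)
  | leaf x => {leaf x}
  | node l r => insert (node l r) (subtrees l ∪ subtrees r)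

/-- `Anc i j` means node `i` is ancestral to or equal to node `j`, i.e. `i ⪰ j`. -/
def Anc (i j : RBT α) : Prop := j ∈ i.subtrees

instance (i j : RBT α) : Decidable (Anc i j) :=
  inferInstanceAs (Decidable (j ∈ i.subtrees))

/-- Whether a node is internal (a non-leaf). -/
def isInternal : RBT α → Bool
  | leaf _ => false
  | node _ _ => true

/-- The internal nodes of a tree. -/
def internals (t : RBT α) : Finset (RBT α) :=
  t.subtrees.filter fun s => s.isInternal = true

/-- A coalescent history for a gene tree `T` relative to a species tree
topology `ψ`: a map `h : I_T → I_ψ` such that the clade of `j` is contained in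
the clade of `h j` for every internal node `j` of `T`, and `h i ⪰ h j` in `ψ`
whenever `i ⪰ j` in `T`. -/
def IsCoalHistory (ψ T : RBT α) (h : ↥T.internals → ↥ψ.internals) : Prop :=
  (∀ j : ↥T.internals, (j : RBT α).clade ⊆ ((h j : RBT α)).clade) ∧
  ∀ i j : ↥T.internals, Anc (i : RBT α) (j : RBT α) →
    Anc (h i : RBT α) ((h j : RBT α))

/-- The set `H_{ψ,T}` of coalescent histories for `T` relative to `ψ`. -/
def coalHistories (ψ T : RBT α) : Set (↥T.internals → ↥ψ.internals) :=
  {h | IsCoalHistory ψ T h}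

/-- The map `Φ_{ψ,T}`: from a coalescent history, record only the number of
coalescent events `|h⁻¹(i)|` occurring at each internal node `i` of `ψ`. -/
def Phi (ψ T : RBT α) (h : ↥T.internals → ↥ψ.internals) : ↥ψ.internals → ℕ :=
  fun i => (Finset.univ.filter fun j : ↥T.internals => h j = i).card

/-- A population history for `ψ`, where `n` is the number of taxa: a map
`y : I_ψ → ℕ` with total sum `n - 1` such that, for every internal node `i`,
the sum of `y` over internal nodes `j` with `i ⪰ j` is at most `ℓ_i - 1`. -/
def IsPopHistory (ψ : RBT α) (n : ℕ) (y : ↥ψ.internals → ℕ) : Prop :=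
  (∑ i : ↥ψ.internals, y i = n - 1) ∧
  ∀ i : ↥ψ.internals,
    (∑ j ∈ Finset.univ.filter
        (fun j : ↥ψ.internals => Anc (i : RBT α) (j : RBT α)), y j)
      ≤ (i : RBT α).clade.card - 1

/-- The set `Y_ψ` of population histories for `ψ` on `n` taxa. -/
def popHistories (ψ : RBT α) (n : ℕ) : Set (↥ψ.internals → ℕ) :=
  {y | IsPopHistory ψ n y}

/-- A caterpillar: a rooted binary tree whose internal nodes are totally
ordered by the ancestry relation. -/
def IsCaterpillar (T : RBT α) : Prop :=
  ∀ i ∈ T.internals, ∀ j ∈ T.internals, Anc i j ∨ Anc j i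

/-- The set of clades of a tree. -/
def cladeSet (t : RBT α) : Set (Finset α) :=
  {s | ∃ v ∈ t.subtrees, v.clade = s}

end RBT

namespace RBT

variable {α : Type} [DecidableEq α]

theorem leafList_ne_nil : ∀ (t : RBT α), t.leafList ≠ []
  | leaf x => by simp [leafList]
  | node l r => by
      simp only [leafList, ne_eq, List.append_eq_nil_iff]
      rintro ⟨h, -⟩; exact leafList_ne_nil l h

theorem clade_nonempty (t : RBT α) : t.clade.Nonempty := by
  obtain ⟨x, hx⟩ := List.exists_mem_of_ne_nil _ (leafList_ne_nil t)
  exact ⟨x, by simpa [clade] using hx⟩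

theorem self_mem_subtrees (t : RBT α) : t ∈ t.subtrees := by
  cases t <;> simp [subtrees]

theorem mem_subtrees_node {l r s : RBT α} :
    s ∈ (node l r).subtrees ↔ s = node l r ∨ s ∈ l.subtrees ∨ s ∈ r.subtrees := by
  simp [subtrees]

theorem leafList_sublist_of_mem_subtrees :
    ∀ {t s : RBT α}, s ∈ t.subtrees → s.leafList.Sublist t.leafList := by
  intro t
  induction t with
  | leaf x => intro s hs; simp [subtrees] at hs; subst hs; exact List.Sublist.refl _
  | node l r ihl ihr =>
      intro s hs
      rcases mem_subtrees_node.mp hs with h | h | h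
      · subst h; exact List.Sublist.refl _
      · exact (ihl h).trans (List.sublist_append_left _ _)
      · exact (ihr h).trans (List.sublist_append_right _ _)

theorem clade_subset_of_mem_subtrees {t s : RBT α} (h : s ∈ t.subtrees) :
    s.clade ⊆ t.clade := by
  intro x hx
  simp only [clade, List.mem_toFinset] at hx ⊢
  exact (leafList_sublist_of_mem_subtrees h).subset hx

theorem nodup_of_mem_subtrees {t s : RBT α} (ht : t.leafList.Nodup)
    (h : s ∈ t.subtrees) : s.leafList.Nodup :=
  (leafList_sublist_of_mem_subtrees h).nodup ht

theorem subtrees_subset_of_mem :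
    ∀ {t s : RBT α}, s ∈ t.subtrees → s.subtrees ⊆ t.subtrees := by
  intro t
  induction t with
  | leaf x => intro s hs; simp [subtrees] at hs; subst hs; exact fun _ h => h
  | node l r ihl ihr =>
      intro s hs
      rcases mem_subtrees_node.mp hs with h | h | h
      · subst h; exact fun _ h => h
      · exact fun u hu => mem_subtrees_node.mpr (Or.inr (Or.inl (ihl h hu)))
      · exact fun u hu => mem_subtrees_node.mpr (Or.inr (Or.inr (ihr h hu)))

theorem clade_node (l r : RBT α) : (node l r).clade = l.clade ∪ r.clade := by
  simp [clade, leafList]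

theorem disjoint_clade_of_nodup {l r : RBT α} (h : (node l r).leafList.Nodup) :
    Disjoint l.clade r.clade := by
  simp only [leafList, List.nodup_append] at h
  rw [Finset.disjoint_left]
  intro a hal har
  exact h.2.2 a (by simpa [clade] using hal) a (by simpa [clade] using har) rfl

theorem nodup_left {l r : RBT α} (h : (node l r).leafList.Nodup) : l.leafList.Nodup := by
  simp only [leafList, List.nodup_append] at h; exact h.1

theorem nodup_right {l r : RBT α} (h : (node l r).leafList.Nodup) : r.leafList.Nodup := by
  simp only [leafList, List.nodup_append] at h; exact h.2.1

end RBT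

namespace RBT

set_option linter.unusedSectionVars false

variable {α : Type} [DecidableEq α]

theorem card_lt_of_mem_subtrees :
    ∀ {t s : RBT α}, t.leafList.Nodup → s ∈ t.subtrees →
      s = t ∨ s.clade.card < t.clade.card := by
  intro t
  induction t with
  | leaf x => intro s _ hs; simp [subtrees] at hs; exact Or.inl hs
  | node l r ihl ihr =>
      intro s ht hs
      rcases mem_subtrees_node.mp hs with h | h | h
      · exact Or.inl h
      · refine Or.inr ?_
        have h1 : s.clade.card ≤ l.clade.card :=
          Finset.card_le_card (clade_subset_of_mem_subtrees h)
        have hd := disjoint_clade_of_nodup ht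
        have : (node l r).clade.card = l.clade.card + r.clade.card := by
          rw [clade_node, Finset.card_union_of_disjoint hd]
        have hr := (clade_nonempty r).card_pos
        omega
      · refine Or.inr ?_
        have h1 : s.clade.card ≤ r.clade.card :=
          Finset.card_le_card (clade_subset_of_mem_subtrees h)
        have hd := disjoint_clade_of_nodup ht
        have : (node l r).clade.card = l.clade.card + r.clade.card := by
          rw [clade_node, Finset.card_union_of_disjoint hd]
        have hl := (clade_nonempty l).card_pos
        omega

theorem laminar :
    ∀ {t s u : RBT α}, t.leafList.Nodup → s ∈ t.subtrees → u ∈ t.subtrees →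
      u ∈ s.subtrees ∨ s ∈ u.subtrees ∨ Disjoint s.clade u.clade := by
  intro t
  induction t with
  | leaf x =>
      intro s u _ hs hu; simp [subtrees] at hs hu; subst hs; subst hu
      exact Or.inl (self_mem_subtrees _)
  | node l r ihl ihr =>
      intro s u ht hs hu
      have hd := disjoint_clade_of_nodup ht
      rcases mem_subtrees_node.mp hs with h | h | h
      · subst h; exact Or.inl hu
      · rcases mem_subtrees_node.mp hu with h' | h' | h'
        · subst h'; exact Or.inr (Or.inl hs)
        · exact ihl (nodup_left ht) h h'
        · exact Or.inr (Or.inr (hd.mono (clade_subset_of_mem_subtrees h)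
            (clade_subset_of_mem_subtrees h')))
      · rcases mem_subtrees_node.mp hu with h' | h' | h'
        · subst h'; exact Or.inr (Or.inl hs)
        · exact Or.inr (Or.inr ((hd.symm).mono (clade_subset_of_mem_subtrees h)
            (clade_subset_of_mem_subtrees h')))
        · exact ihr (nodup_right ht) h h'

theorem anc_of_clade_subset {t s u : RBT α} (ht : t.leafList.Nodup)
    (hs : s ∈ t.subtrees) (hu : u ∈ t.subtrees) (hsub : u.clade ⊆ s.clade) :
    u ∈ s.subtrees := by
  rcases laminar ht hs hu with h | h | h
  · exact h
  · rcases card_lt_of_mem_subtrees (nodup_of_mem_subtrees ht hu) h with h' | h'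
    · subst h'; exact self_mem_subtrees _
    · exact absurd (Finset.card_le_card hsub) (by omega)
  · obtain ⟨x, hx⟩ := clade_nonempty u
    exact absurd rfl (h.forall_ne_finset (hsub hx) hx)

theorem clade_injOn {t : RBT α} (ht : t.leafList.Nodup) {s u : RBT α}
    (hs : s ∈ t.subtrees) (hu : u ∈ t.subtrees) (h : s.clade = u.clade) : s = u := by
  have h1 := anc_of_clade_subset ht hs hu h.ge
  rcases card_lt_of_mem_subtrees (nodup_of_mem_subtrees ht hs) h1 with h' | h'
  · exact h'.symm
  · rw [h] at h'; omega

theorem node_not_mem_left {l r : RBT α} (ht : (node l r).leafList.Nodup) :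
    node l r ∉ l.subtrees := by
  intro h
  obtain ⟨x, hx⟩ := clade_nonempty r
  have hx2 : x ∈ (node l r).clade := by rw [clade_node]; exact Finset.mem_union_right _ hx
  have := clade_subset_of_mem_subtrees h hx2
  exact (disjoint_clade_of_nodup ht).forall_ne_finset this hx rfl

theorem node_not_mem_right {l r : RBT α} (ht : (node l r).leafList.Nodup) :
    node l r ∉ r.subtrees := by
  intro h
  obtain ⟨x, hx⟩ := clade_nonempty l
  have hx2 : x ∈ (node l r).clade := by rw [clade_node]; exact Finset.mem_union_left _ hx
  have := clade_subset_of_mem_subtrees h hx2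
  exact (disjoint_clade_of_nodup ht).forall_ne_finset hx this rfl

theorem disjoint_subtrees {l r : RBT α} (ht : (node l r).leafList.Nodup) :
    Disjoint l.subtrees r.subtrees := by
  rw [Finset.disjoint_left]
  intro s hsl hsr
  obtain ⟨x, hx⟩ := clade_nonempty s
  exact (disjoint_clade_of_nodup ht).forall_ne_finset
    (clade_subset_of_mem_subtrees hsl hx) (clade_subset_of_mem_subtrees hsr hx) rfl

@[simp] theorem isInternal_leaf (x : α) : (leaf x : RBT α).isInternal = false := rfl

@[simp] theorem isInternal_node (l r : RBT α) : (node l r).isInternal = true := rfl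

theorem card_clade {t : RBT α} (ht : t.leafList.Nodup) :
    t.clade.card = t.leafList.length :=
  List.toFinset_card_of_nodup ht

theorem internals_node (l r : RBT α) :
    (node l r).internals = insert (node l r) (l.internals ∪ r.internals) := by
  simp only [internals, subtrees, Finset.filter_insert, Finset.filter_union]
  simp [isInternal]

theorem card_internals : ∀ {t : RBT α}, t.leafList.Nodup →
    t.internals.card + 1 = t.leafList.length := by
  intro t
  induction t with
  | leaf x =>
      intro _
      simp [internals, subtrees, leafList, Finset.filter_singleton]
  | node l r ihl ihr =>
      intro ht
      have hnl : node l r ∉ l.internals ∪ r.internals := by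
        intro h
        rcases Finset.mem_union.mp h with h | h
        · exact node_not_mem_left ht (Finset.filter_subset _ _ h)
        · exact node_not_mem_right ht (Finset.filter_subset _ _ h)
      have hdisj : Disjoint l.internals r.internals :=
        (disjoint_subtrees ht).mono (Finset.filter_subset _ _) (Finset.filter_subset _ _)
      rw [internals_node, Finset.card_insert_of_notMem hnl,
        Finset.card_union_of_disjoint hdisj]
      have h1 := ihl (nodup_left ht)
      have h2 := ihr (nodup_right ht)
      simp only [leafList, List.length_append]
      omega

theorem leaf_mem_subtrees : ∀ {t : RBT α} {x : α}, x ∈ t.leafList → leaf x ∈ t.subtrees := by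
  intro t
  induction t with
  | leaf y => intro x hx; simp [leafList] at hx; subst hx; simp [subtrees]
  | node l r ihl ihr =>
      intro x hx
      rcases List.mem_append.mp hx with h | h
      · exact mem_subtrees_node.mpr (Or.inr (Or.inl (ihl h)))
      · exact mem_subtrees_node.mpr (Or.inr (Or.inr (ihr h)))

theorem two_le_card_clade {t : RBT α} (ht : t.leafList.Nodup)
    (hint : t.isInternal = true) : 2 ≤ t.clade.card := by
  cases t with
  | leaf x => simp [isInternal] at hint
  | node l r =>
      have hd := disjoint_clade_of_nodup ht
      rw [clade_node, Finset.card_union_of_disjoint hd]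
      have := (clade_nonempty l).card_pos
      have := (clade_nonempty r).card_pos
      omega

theorem internal_of_two_le {t : RBT α} (h : 2 ≤ t.clade.card) : t.isInternal = true := by
  cases t with
  | leaf x => simp [clade, leafList] at h
  | node l r => rfl

theorem mem_internals {t s : RBT α} :
    s ∈ t.internals ↔ s ∈ t.subtrees ∧ s.isInternal = true := Finset.mem_filter

end RBT

/-- Key combinatorial lemma: a nonempty laminar family of finite sets, each of
size at least 2, has at most `|union| - 1` members; and if it has exactly
`|union| - 1` members then the union itself belongs to the family. -/
theorem laminar_card_lemma {α : Type} [DecidableEq α] :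
    ∀ (F : Finset (Finset α)),
    (∀ A ∈ F, ∀ B ∈ F, A ⊆ B ∨ B ⊆ A ∨ Disjoint A B) →
    (∀ A ∈ F, 2 ≤ A.card) → F.Nonempty →
    F.card + 1 ≤ (F.sup id).card ∧ (F.card + 1 = (F.sup id).card → F.sup id ∈ F) := by
  intro F
  induction F using Finset.strongInductionOn with
  | _ F ih =>
  intro hlam hcard hne
  obtain ⟨M, hM, hMmax⟩ := F.exists_max_image Finset.card hne
  set F1 : Finset (Finset α) := F.filter (· ⊆ M) with hF1def
  set F2 : Finset (Finset α) := F.filter (fun A => ¬ A ⊆ M) with hF2def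
  have hMF1 : M ∈ F1 := Finset.mem_filter.mpr ⟨hM, subset_rfl⟩
  have hF1sub : ∀ A ∈ F1, A ⊆ M := fun A hA => (Finset.mem_filter.mp hA).2
  have hF2disj : ∀ A ∈ F2, Disjoint A M := by
    intro A hA
    obtain ⟨hAF, hAnsub⟩ := Finset.mem_filter.mp hA
    rcases hlam A hAF M hM with h | h | h
    · exact absurd h hAnsub
    · have : M = A := Finset.eq_of_subset_of_card_le h (hMmax A hAF)
      exact absurd (le_of_eq this.symm) hAnsub
    · exact h
  -- bound on F1
  have hF1bound : F1.card + 1 ≤ M.card := by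
    set F1' : Finset (Finset α) := F1.erase M with hF1'def
    have hcard1 : F1.card = F1'.card + 1 := by
      rw [hF1'def, Finset.card_erase_of_mem hMF1]
      have : 0 < F1.card := Finset.card_pos.mpr ⟨M, hMF1⟩
      omega
    rcases F1'.eq_empty_or_nonempty with he | hne'
    · rw [hcard1, he]
      simpa using hcard M hM
    · have hss : F1' ⊂ F := by
        refine Finset.ssubset_iff_of_subset (fun A hA =>
          (Finset.mem_filter.mp (Finset.mem_of_mem_erase hA)).1) |>.mpr ?_
        exact ⟨M, hM, fun h => (Finset.notMem_erase M F1) h⟩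
      have hlam' : ∀ A ∈ F1', ∀ B ∈ F1', A ⊆ B ∨ B ⊆ A ∨ Disjoint A B := fun A hA B hB =>
        hlam A (Finset.mem_filter.mp (Finset.mem_of_mem_erase hA)).1
             B (Finset.mem_filter.mp (Finset.mem_of_mem_erase hB)).1
      have hcard' : ∀ A ∈ F1', 2 ≤ A.card := fun A hA =>
        hcard A (Finset.mem_filter.mp (Finset.mem_of_mem_erase hA)).1
      obtain ⟨hle, heq⟩ := ih F1' hss hlam' hcard' hne'
      have hsupM : F1'.sup id ⊆ M :=
        Finset.sup_le fun A hA => hF1sub A (Finset.mem_of_mem_erase hA)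
      have hsupcard : (F1'.sup id).card ≤ M.card := Finset.card_le_card hsupM
      rcases lt_or_eq_of_le hsupcard with hlt | heqc
      · omega
      · have hsupeq : F1'.sup id = M :=
          Finset.eq_of_subset_of_card_le hsupM (le_of_eq heqc.symm)
        rcases lt_or_eq_of_le hle with hlt | heq2
        · omega
        · have : F1'.sup id ∈ F1' := heq heq2
          rw [hsupeq] at this
          exact absurd this (Finset.notMem_erase M F1)
  rcases F2.eq_empty_or_nonempty with he2 | hne2
  · -- F = F1
    have hFeq : F = F1 := by
      rw [hF1def]
      ext A
      simp only [Finset.mem_filter, iff_self_and]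
      intro hA
      by_contra hns
      exact Finset.notMem_empty A (he2 ▸ (Finset.mem_filter.mpr ⟨hA, hns⟩ : A ∈ F2))
    have hsupF : F.sup id = M := by
      refine le_antisymm (Finset.sup_le fun A hA => hF1sub A (hFeq ▸ hA)) ?_
      exact Finset.le_sup (f := id) hM
    rw [hsupF, hFeq]
    exact ⟨hF1bound, fun _ => hFeq ▸ hM⟩
  · -- F2 nonempty
    have hss2 : F2 ⊂ F := by
      refine Finset.ssubset_iff_of_subset (Finset.filter_subset _ _) |>.mpr ?_
      exact ⟨M, hM, fun h => (Finset.mem_filter.mp h).2 subset_rfl⟩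
    have hlam2 : ∀ A ∈ F2, ∀ B ∈ F2, A ⊆ B ∨ B ⊆ A ∨ Disjoint A B := fun A hA B hB =>
      hlam A (Finset.filter_subset _ _ hA) B (Finset.filter_subset _ _ hB)
    have hcard2 : ∀ A ∈ F2, 2 ≤ A.card := fun A hA =>
      hcard A (Finset.filter_subset _ _ hA)
    obtain ⟨hle2, -⟩ := ih F2 hss2 hlam2 hcard2 hne2
    have hdisjMS : Disjoint M (F2.sup id) :=
      Finset.disjoint_sup_right.mpr fun A hA => (hF2disj A hA).symm
    have hsupF : F.sup id = M ∪ F2.sup id := by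
      have hpart : F1 ∪ F2 = F := Finset.filter_union_filter_not_eq _ F
      calc F.sup id = (F1 ∪ F2).sup id := by rw [hpart]
        _ = F1.sup id ⊔ F2.sup id := Finset.sup_union
        _ = M ∪ F2.sup id := by
            congr 1
            exact le_antisymm (Finset.sup_le fun A hA => hF1sub A hA)
              (Finset.le_sup (f := id) hMF1)
    have hcardsup : (F.sup id).card = M.card + (F2.sup id).card := by
      rw [hsupF, Finset.card_union_of_disjoint hdisjMS]
    have hcardF : F.card = F1.card + F2.card := by
      rw [← Finset.card_filter_add_card_filter_not (s := F) (p := (· ⊆ M))]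
    constructor
    · omega
    · intro h; omega

namespace RBT

set_option linter.unusedSectionVars false

variable {α : Type} [DecidableEq α]

theorem card_subtrees : ∀ {t : RBT α}, t.leafList.Nodup →
    t.subtrees.card + 1 = 2 * t.leafList.length := by
  intro t
  induction t with
  | leaf x => intro _; simp [subtrees, leafList]
  | node l r ihl ihr =>
      intro ht
      have hnl : node l r ∉ l.subtrees ∪ r.subtrees := by
        intro h
        rcases Finset.mem_union.mp h with h | h
        · exact node_not_mem_left ht h
        · exact node_not_mem_right ht h
      rw [subtrees, Finset.card_insert_of_notMem hnl,
        Finset.card_union_of_disjoint (disjoint_subtrees ht)]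
      have h1 := ihl (nodup_left ht)
      have h2 := ihr (nodup_right ht)
      simp only [leafList, List.length_append]
      omega

theorem cladeSet_eq_coe (t : RBT α) : t.cladeSet = ↑(t.subtrees.image clade) := by
  ext s; simp [cladeSet]

theorem clade_leaf (x : α) : (leaf x : RBT α).clade = {x} := by
  simp [clade, leafList]

theorem internals_subset (t : RBT α) : t.internals ⊆ t.subtrees :=
  Finset.filter_subset _ _

theorem card_filter_univ {β : Type} [DecidableEq β] (s : Finset β)
    (p : β → Prop) [DecidablePred p] :
    (Finset.univ.filter (fun x : ↥s => p ↑x)).card = (s.filter p).card := by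
  rw [Finset.univ_eq_attach, Finset.filter_attach, Finset.card_map, Finset.card_attach]

end RBT

/-- There exists a coalescent history `h ∈ H_{ψ,T}` that is a
bijection from `I_T` onto `I_ψ` if and only if `T` has the same set of clades
as `ψ`, i.e. `T` is the matching gene tree of `ψ`. -/
theorem bijective_coalHistory_iff_matching
    {α : Type} [DecidableEq α] (X : Finset α) (n : ℕ)
    (hn : X.card = n) (h2 : 2 ≤ n)
    (ψ T : RBT α) (hψ : ψ.IsTreeOn X) (hT : T.IsTreeOn X) :
    (∃ h ∈ RBT.coalHistories ψ T, Function.Bijective h) ↔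
      T.cladeSet = ψ.cladeSet := by
  open RBT in
  obtain ⟨hψn, hψX⟩ := hψ
  obtain ⟨hTn, hTX⟩ := hT
  have hψlen : ψ.leafList.length = n := by rw [← card_clade hψn, hψX, hn]
  have hTlen : T.leafList.length = n := by rw [← card_clade hTn, hTX, hn]
  have hψint : ψ.internals.card + 1 = n := by rw [card_internals hψn, hψlen]
  have hTint : T.internals.card + 1 = n := by rw [card_internals hTn, hTlen]
  constructor
  · -- forward: a bijective coalescent history forces matching clade sets
    rintro ⟨h, ⟨hc1, hc2⟩, hbij⟩
    rw [cladeSet_eq_coe, cladeSet_eq_coe]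
    -- reduce to an equality of finsets
    have hsub : ψ.subtrees.image clade ⊆ T.subtrees.image clade := by
      intro S hS
      obtain ⟨v, hvψ, rfl⟩ := Finset.mem_image.mp hS
      cases hv : v.isInternal with
      | false =>
          -- v is a leaf
          cases v with
          | node a b => simp at hv
          | leaf x =>
              have hx : x ∈ T.leafList := by
                have : x ∈ ψ.clade := clade_subset_of_mem_subtrees hvψ (by
                  simp [clade_leaf])
                rw [hψX, ← hTX] at this
                simpa [clade] using this
              exact Finset.mem_image.mpr ⟨leaf x, leaf_mem_subtrees hx, rfl⟩
      | true =>
          -- v is internal: the counting argument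
          have hvn : v.leafList.Nodup := nodup_of_mem_subtrees hψn hvψ
          have hm : 2 ≤ v.clade.card := two_le_card_clade hvn hv
          set m := v.clade.card with hmdef
          -- internal nodes of ψ below v
          set Di : Finset ↥ψ.internals :=
            Finset.univ.filter (fun w : ↥ψ.internals => (↑w : RBT α) ∈ v.subtrees)
            with hDidef
          have hDicard : Di.card + 1 = m := by
            have hbij2 : Di.card = v.internals.card := by
              refine Finset.card_bij (fun (w : ↥ψ.internals) (_ : w ∈ Di) => (w : RBT α)) ?_ ?_ ?_
              · intro w hw
                exact mem_internals.mpr ⟨(Finset.mem_filter.mp hw).2,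
                  (mem_internals.mp w.2).2⟩
              · intro w1 _ w2 _ he; exact Subtype.ext he
              · intro u hu
                obtain ⟨huv, huint⟩ := mem_internals.mp hu
                refine ⟨⟨u, mem_internals.mpr ⟨subtrees_subset_of_mem hvψ huv, huint⟩⟩,
                  ?_, rfl⟩
                exact Finset.mem_filter.mpr ⟨Finset.mem_univ _, huv⟩
            rw [hbij2, card_internals hvn, hmdef, card_clade hvn]
          -- internal nodes of T mapped below v
          set A : Finset ↥T.internals :=
            Finset.univ.filter (fun j : ↥T.internals => h j ∈ Di) with hAdef
          have hAcard : A.card = Di.card := by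
            apply Finset.card_bij (fun j _ => h j)
            · intro j hj; exact (Finset.mem_filter.mp hj).2
            · intro j1 _ j2 _ he; exact hbij.1 he
            · intro w hw
              obtain ⟨j, hj⟩ := hbij.2 w
              exact ⟨j, Finset.mem_filter.mpr ⟨Finset.mem_univ _, hj ▸ hw⟩, hj⟩
          -- the clades of those nodes
          set F : Finset (Finset α) := A.image (fun j : ↥T.internals => (j : RBT α).clade) with hFdef
          have hmemsub : ∀ j : ↥T.internals, (↑j : RBT α) ∈ T.subtrees :=
            fun j => internals_subset T j.2
          have hFcard : F.card = A.card := by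
            apply Finset.card_image_of_injOn
            intro j1 _ j2 _ he
            exact Subtype.ext (clade_injOn hTn (hmemsub j1) (hmemsub j2) he)
          have hFsub : ∀ B ∈ F, B ⊆ v.clade := by
            intro B hB
            obtain ⟨j, hjA, rfl⟩ := Finset.mem_image.mp hB
            have hjDi : (↑(h j) : RBT α) ∈ v.subtrees := by
              have := (Finset.mem_filter.mp (Finset.mem_filter.mp hjA).2).2
              exact this
            exact (hc1 j).trans (clade_subset_of_mem_subtrees hjDi)
          have hF2 : ∀ B ∈ F, 2 ≤ B.card := by
            intro B hB
            obtain ⟨j, hjA, rfl⟩ := Finset.mem_image.mp hB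
            exact two_le_card_clade (nodup_of_mem_subtrees hTn (hmemsub j))
              (mem_internals.mp j.2).2
          have hFlam : ∀ B ∈ F, ∀ C ∈ F, B ⊆ C ∨ C ⊆ B ∨ Disjoint B C := by
            intro B hB C hC
            obtain ⟨j1, _, rfl⟩ := Finset.mem_image.mp hB
            obtain ⟨j2, _, rfl⟩ := Finset.mem_image.mp hC
            rcases laminar hTn (hmemsub j1) (hmemsub j2) with hh | hh | hh
            · exact Or.inr (Or.inl (clade_subset_of_mem_subtrees hh))
            · exact Or.inl (clade_subset_of_mem_subtrees hh)
            · exact Or.inr (Or.inr hh)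
          have hFne : F.Nonempty := by
            rw [← Finset.card_pos, hFcard, hAcard]; omega
          obtain ⟨hle, heq⟩ := laminar_card_lemma F hFlam hF2 hFne
          have hsup : F.sup id ⊆ v.clade := Finset.sup_le fun B hB => hFsub B hB
          have hsupcard : (F.sup id).card ≤ m := Finset.card_le_card hsup
          have hFc : F.card + 1 = m := by rw [hFcard, hAcard]; exact hDicard
          have hsupeq : F.sup id = v.clade :=
            Finset.eq_of_subset_of_card_le hsup (by omega)
          have hmemF : v.clade ∈ F := by
            rw [← hsupeq]; exact heq (by omega)
          obtain ⟨j, _, hj⟩ := Finset.mem_image.mp hmemF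
          exact Finset.mem_image.mpr ⟨↑j, hmemsub j, hj⟩
    -- equal cardinalities
    have hcT : (T.subtrees.image clade).card = T.subtrees.card :=
      Finset.card_image_of_injOn fun s hs u hu he => clade_injOn hTn hs hu he
    have hcψ : (ψ.subtrees.image clade).card = ψ.subtrees.card :=
      Finset.card_image_of_injOn fun s hs u hu he => clade_injOn hψn hs hu he
    have hst := card_subtrees hTn
    have hsψ := card_subtrees hψn
    have : ψ.subtrees.image clade = T.subtrees.image clade :=
      Finset.eq_of_subset_of_card_le hsub (by omega)
    rw [this]
  · -- backward: matching clade sets give a bijective coalescent history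
    intro hcs
    have key : ∀ j : ↥T.internals, ∃ v : ↥ψ.internals,
        (↑v : RBT α).clade = (↑j : RBT α).clade := by
      intro j
      have hjT : (↑j : RBT α) ∈ T.subtrees := internals_subset T j.2
      have : (↑j : RBT α).clade ∈ ψ.cladeSet := by
        rw [← hcs]; exact ⟨↑j, hjT, rfl⟩
      obtain ⟨v, hvψ, hveq⟩ := this
      have h2c : 2 ≤ v.clade.card := by
        rw [hveq]
        exact two_le_card_clade (nodup_of_mem_subtrees hTn hjT) (mem_internals.mp j.2).2
      exact ⟨⟨v, mem_internals.mpr ⟨hvψ, internal_of_two_le h2c⟩⟩, hveq⟩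
    choose f hf using key
    have hmemT : ∀ j : ↥T.internals, (↑j : RBT α) ∈ T.subtrees :=
      fun j => internals_subset T j.2
    have hmemψ : ∀ i : ↥ψ.internals, (↑i : RBT α) ∈ ψ.subtrees :=
      fun i => internals_subset ψ i.2
    refine ⟨f, ⟨fun j => by rw [hf j], ?_⟩, ?_⟩
    · intro i j hij
      have hsubc : (↑j : RBT α).clade ⊆ (↑i : RBT α).clade :=
        clade_subset_of_mem_subtrees hij
      have : (↑(f j) : RBT α).clade ⊆ (↑(f i) : RBT α).clade := by
        rw [hf i, hf j]; exact hsubc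
      exact anc_of_clade_subset hψn (hmemψ (f i)) (hmemψ (f j)) this
    · have hinj : Function.Injective f := by
        intro j1 j2 he
        have : (↑j1 : RBT α).clade = (↑j2 : RBT α).clade := by
          rw [← hf j1, ← hf j2, he]
        exact Subtype.ext (clade_injOn hTn (hmemT j1) (hmemT j2) this)
      rw [Fintype.bijective_iff_injective_and_card]
      refine ⟨hinj, ?_⟩
      rw [Fintype.card_coe, Fintype.card_coe]
      omega
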